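/- arXiv:1109.3401 — 2 statements merged into one kernel-verified Lean document; each statement's English description precedes it below -/
import Mathlib

section
/- If a feasible routing for the conservative k-of-n max-throughput LP saturates every processor (i.e., ∑_T g(T,i)·z_T = r_i for all i), then it achieves the maximum throughput among all feasible routings. -/
open Finset

noncomputable def wt {n : ℕ} (p : Fin n → ℝ) (x : Fin n → Bool) : ℝ :=
  ∏ i, if x i then p i else 1 - p i

open scoped Classical in
/-- Probability of an event under the product Bernoulli distribution with parameters `p`. -/
noncomputable def pr {n : ℕ} (p : Fin n → ℝ) (E : (Fin n → Bool) → Prop) : ℝ :=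
  ∑ x ∈ Finset.univ.filter E, wt p x

/-- Number of zeros (failed tests) in an outcome vector. -/
def zeros {n : ℕ} (x : Fin n → Bool) : ℕ := ∑ i, if x i then 0 else 1

/-- Binary decision trees over `n` tests. -/
inductive DTree (n : ℕ) : Type
  | leaf (b : Bool) : DTree n
  | node (i : Fin n) (l r : DTree n) : DTree n

def DTree.eval {n : ℕ} : DTree n → (Fin n → Bool) → Bool
  | .leaf b, _ => b
  | .node i l r, x => if x i then DTree.eval r x else DTree.eval l x

/-- The set of tests performed on item `x` by strategy `T`. -/
def DTree.tests {n : ℕ} : DTree n → (Fin n → Bool) → Finset (Fin n)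
  | .leaf _, _ => ∅
  | .node i l r, x => insert i (if x i then DTree.tests r x else DTree.tests l x)

/-- The number of tests (path length) performed on item `x` by strategy `T`. -/
def DTree.depthOn {n : ℕ} : DTree n → (Fin n → Bool) → ℕ
  | .leaf _, _ => 0
  | .node i l r, x => (if x i then DTree.depthOn r x else DTree.depthOn l x) + 1

/-- `gprob p T i` : probability that test `i` is performed on a random item under strategy `T`. -/
noncomputable def gprob {n : ℕ} (p : Fin n → ℝ) (T : DTree n) (i : Fin n) : ℝ :=
  pr p (fun x => i ∈ T.tests x)

/-- A conservative `k`-of-`n` strategy: tests along each path are distinct, the strategy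
computes the `k`-of-`n` function, items with fewer than `k` zeros undergo all `n` tests,
and items with at least `k` zeros are tested exactly until `k` zeros are observed. -/
def Conservative {n : ℕ} (k : ℕ) (T : DTree n) : Prop :=
  (∀ x, T.depthOn x = (T.tests x).card) ∧
  (∀ x : Fin n → Bool, T.eval x = decide (zeros x < k)) ∧
  (∀ x, zeros x < k → T.tests x = Finset.univ) ∧
  (∀ x, k ≤ zeros x → ((T.tests x).filter (fun i => x i = false)).card = k)

/-!
A conservative strategy observes exactly `min(k, Z)` zeros on an item with `Z` zeros, so a
routing of throughput `F` produces zeros at rate `F · α`, where `α = E[min(k, Z)]`. Whether test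
`i` is performed on an item does not depend on the outcome of test `i`, so processor `i` produces
zeros at rate `(load on i) · (1 - pᵢ) ≤ rᵢ (1 - pᵢ)`. Summing over processors gives
`F · α ≤ ∑ rᵢ (1 - pᵢ)`, with equality for a saturating routing.
-/

theorem DTree.mem_tests_update {n : ℕ} (T : DTree n) (x : Fin n → Bool) (i : Fin n) (b : Bool) :
    i ∈ T.tests (Function.update x i b) ↔ i ∈ T.tests x := by
  induction T with
  | leaf => simp [DTree.tests]
  | node j l r ihl ihr =>
    by_cases hji : j = i
    · subst hji
      simp [DTree.tests]
    · simp only [DTree.tests, mem_insert, Function.update_of_ne hji, Ne.symm hji, false_or]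
      split <;> assumption

theorem wt_update {n : ℕ} (p : Fin n → ℝ) (x : Fin n → Bool) (i : Fin n) (b : Bool) :
    wt p (Function.update x i b) =
      (if b then p i else 1 - p i) * ∏ j ∈ univ.erase i, if x j then p j else 1 - p j := by
  rw [wt, ← mul_prod_erase univ _ (mem_univ i), Function.update_self]
  congr 1
  exact prod_congr rfl fun j hj => by rw [Function.update_of_ne (ne_of_mem_erase hj)]

open scoped Classical in
theorem pr_and_eq_false {n : ℕ} (p : Fin n → ℝ) (i : Fin n) (E : (Fin n → Bool) → Prop)
    (hE : ∀ x b, E (Function.update x i b) ↔ E x) :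
    pr p (fun x => E x ∧ x i = false) = (1 - p i) * pr p E := by
  rw [← sub_eq_zero, pr, pr, sum_filter, sum_filter, mul_sum, ← sum_sub_distrib]
  -- flipping coordinate `i` changes the sign of the summand
  refine sum_ninvolution (fun x => Function.update x i (!x i)) (fun x => ?_)
    (fun x _ h => by simpa using congr_fun h i) (fun _ => mem_univ _) (fun x => by simp)
  have hx : wt p x = wt p (Function.update x i (x i)) := by rw [Function.update_eq_self]
  simp only [hE, Function.update_self, hx, wt_update]
  cases x i <;> by_cases E x <;> simp [*] <;> ring

theorem Conservative.card_filter_tests_eq_false {n k : ℕ} {T : DTree n} (hT : Conservative k T)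
    (x : Fin n → Bool) : #{i ∈ T.tests x | x i = false} = min k (zeros x) := by
  obtain ⟨-, -, hall, hstop⟩ := hT
  rcases lt_or_ge (zeros x) k with h | h
  · rw [hall x h, min_eq_right h.le, zeros, card_filter]
    exact sum_congr rfl fun i _ => by cases x i <;> rfl
  · rw [hstop x h, min_eq_left h]

/-- `α = E[min(k, Z)]`, the expected number of zeros a conservative strategy observes. -/
noncomputable def expectedZeros {n : ℕ} (p : Fin n → ℝ) (k : ℕ) : ℝ :=
  ∑ x, wt p x * (min k (zeros x) : ℝ)

theorem Conservative.sum_gprob_mul_one_sub {n k : ℕ} (p : Fin n → ℝ) {T : DTree n}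
    (hT : Conservative k T) : ∑ i, gprob p T i * (1 - p i) = expectedZeros p k := by
  have hzero : ∀ i, gprob p T i * (1 - p i) =
      ∑ x, if i ∈ T.tests x ∧ x i = false then wt p x else 0 := fun i => by
    rw [gprob, mul_comm, ← pr_and_eq_false p i _ (T.mem_tests_update · i), pr, sum_filter]
    congr!
  simp_rw [hzero]
  rw [sum_comm, expectedZeros]
  refine sum_congr rfl fun x _ => ?_
  rw [← sum_filter, sum_const, nsmul_eq_mul, mul_comm, ← filter_filter, filter_univ_mem,
    hT.card_filter_tests_eq_false x]
  push_cast
  rfl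

theorem expectedZeros_pos {n k : ℕ} {p : Fin n → ℝ} (hp0 : ∀ i, 0 ≤ p i) (hp1 : ∀ i, p i < 1)
    (hk : 0 < k) (hn : 0 < n) : 0 < expectedZeros p k := by
  have hwt : ∀ x, 0 ≤ wt p x := fun x =>
    prod_nonneg fun i _ => by split <;> linarith [hp0 i, hp1 i]
  have hallZero : 0 < wt p (fun _ => false) * (min k (zeros fun _ : Fin n => false) : ℝ) := by
    refine mul_pos (prod_pos fun i _ => by simpa using hp1 i) ?_
    simp [zeros, hk, hn]
  exact hallZero.trans_le
    (single_le_sum (f := fun x => wt p x * (min k (zeros x) : ℝ))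
      (fun x _ => mul_nonneg (hwt x) (by positivity)) (mem_univ _))

theorem sum_load_mul_one_sub_eq {n k : ℕ} (p : Fin n → ℝ) (S : Finset (DTree n))
    (z : DTree n → ℝ) (hS : ∀ T ∈ S, Conservative k T) :
    ∑ i, (∑ T ∈ S, gprob p T i * z T) * (1 - p i) = expectedZeros p k * ∑ T ∈ S, z T := by
  calc ∑ i, (∑ T ∈ S, gprob p T i * z T) * (1 - p i)
      = ∑ T ∈ S, (∑ i, gprob p T i * (1 - p i)) * z T := by
        simp_rw [sum_mul]
        rw [sum_comm]
        exact sum_congr rfl fun _ _ => sum_congr rfl fun _ _ => by ring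
    _ = expectedZeros p k * ∑ T ∈ S, z T := by
        rw [mul_sum]
        exact sum_congr rfl fun T hT => by rw [(hS T hT).sum_gprob_mul_one_sub, mul_comm]

theorem stmt_5_general (n k : ℕ) (hk1 : 1 ≤ k) (hkn : k ≤ n)
    (p r : Fin n → ℝ) (hp : ∀ i, 0 < p i ∧ p i < 1)
    (S : Finset (DTree n)) (z : DTree n → ℝ)
    (hcons : ∀ T ∈ S, Conservative k T)
    (hsat : ∀ i, ∑ T ∈ S, gprob p T i * z T = r i) :
    ∀ (S' : Finset (DTree n)) (z' : DTree n → ℝ),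
      (∀ T ∈ S', Conservative k T) → (∀ T, 0 ≤ z' T) →
      (∀ i, ∑ T ∈ S', gprob p T i * z' T ≤ r i) →
      ∑ T ∈ S', z' T ≤ ∑ T ∈ S, z T := by
  intro S' z' hcons' _ hfeas
  have hα : 0 < expectedZeros p k :=
    expectedZeros_pos (fun i => (hp i).1.le) (fun i => (hp i).2) hk1 (hk1.trans hkn)
  refine le_of_mul_le_mul_left ?_ hα
  calc expectedZeros p k * ∑ T ∈ S', z' T
      = ∑ i, (∑ T ∈ S', gprob p T i * z' T) * (1 - p i) :=
        (sum_load_mul_one_sub_eq p S' z' hcons').symm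
    _ ≤ ∑ i, r i * (1 - p i) :=
        sum_le_sum fun i _ => mul_le_mul_of_nonneg_right (hfeas i) (sub_nonneg.2 (hp i).2.le)
    _ = expectedZeros p k * ∑ T ∈ S, z T := by
        simp_rw [← hsat]
        exact sum_load_mul_one_sub_eq p S z hcons

/-- Saturation implies optimality for the conservative k-of-n max-throughput LP. -/
theorem stmt_5 (n k : ℕ) (hk1 : 1 ≤ k) (hkn : k ≤ n)
    (p r : Fin n → ℝ) (hp : ∀ i, 0 < p i ∧ p i < 1) (hr : ∀ i, 0 < r i)
    (S : Finset (DTree n)) (z : DTree n → ℝ)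
    (hcons : ∀ T ∈ S, Conservative k T) (hz : ∀ T, 0 ≤ z T)
    (hsat : ∀ i, ∑ T ∈ S, gprob p T i * z T = r i) :
    ∀ (S' : Finset (DTree n)) (z' : DTree n → ℝ),
      (∀ T ∈ S', Conservative k T) → (∀ T, 0 ≤ z' T) →
      (∀ i, ∑ T ∈ S', gprob p T i * z' T ≤ r i) →
      ∑ T ∈ S', z' T ≤ ∑ T ∈ S, z T :=
  stmt_5_general n k hk1 hkn p r hp S z hcons hsat
end

section
/- Let x_1,...,x_n be independent Bernoulli variables, q_i = 1-p_i, q_0 := q_n, and fix k ≥ 1. If t units of flow are distributed among the n cyclic shifts π_i = (i, i+1, ..., n, 1, ..., i-1), assigning fraction (1-p_{i-1})/∑_{j=1}^n (1-p_{j-1}) to the conservative strategy T_k(π_i), then the expected load on every processor is the same, namely t·α/∑_{j=1}^n (1-p_j), where α = ∑_{t'=1}^k P(∑_{ℓ=1}^n (1-x_ℓ) ≥ t'). -/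
/-!
Under the shift starting at `s`, test `m` is performed iff fewer than `k` failures occur among
the tests `s, s + 1, …, m - 1`. Test `s - 1` is not among them, so the weight
`1 - p (s - 1) = P(x (s - 1) = false)` turns the `s`-th term into the probability that `s - 1` fails
and fewer than `k` failures lie cyclically between `s - 1` and `m`. Summing over `s` therefore
counts the failures `z` with fewer than `k` failures between `z` and `m`; ranking the failures by
their distance back from `m` shows that there are exactly `min Z k` of them, `Z` being the number
of failures, and `E[min Z k] = ∑_{t=1}^k P(Z ≥ t)`.
-/

open Finset

/-- The conservative strategy that performs the listed tests in order until `k` zeros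
have been observed or the list is exhausted. -/
def permTree (n : ℕ) : ℕ → List (Fin n) → DTree n
  | 0, _ => .leaf false
  | _ + 1, [] => .leaf true
  | k + 1, i :: rest => .node i (permTree n k rest) (permTree n (k + 1) rest)

/-- The conservative `k`-of-`n` strategy following the order `π 0, π 1, …`. -/
def permStrat {n : ℕ} (k : ℕ) (π : Equiv.Perm (Fin n)) : DTree n :=
  permTree n k ((List.finRange n).map π)

theorem Fin.sub_one_sub_lt_iff {n : ℕ} [NeZero n] (t j : Fin n) : t - 1 - j < t ↔ j < t := by
  obtain ⟨n, rfl⟩ := Nat.exists_eq_succ_of_ne_zero (NeZero.ne n)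
  rw [sub_right_comm, Fin.lt_def, Fin.coe_sub_one]
  rcases lt_trichotomy j t with h | rfl | h
  · have h1 := Fin.sub_val_of_le h.le
    have h0 : t - j ≠ 0 := by rw [Ne, ← Fin.val_eq_zero_iff, h1]; omega
    rw [if_neg h0, h1]; simp only [h, iff_true]; omega
  · simp [Nat.le_of_lt_succ j.isLt]
  · have h1 := Fin.coe_sub_iff_lt.2 h
    have h0 : t - j ≠ 0 := by rw [Ne, ← Fin.val_eq_zero_iff, h1]; omega
    rw [if_neg h0, h1]; simp only [h.not_gt, iff_false]; omega

theorem Finset.card_filter_card_filter_lt_lt {α : Type*} [LinearOrder α] (S : Finset α) (k : ℕ) :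
    #{a ∈ S | #{b ∈ S | b < a} < k} = min #S k := by
  classical
  induction S using Finset.induction_on_max with
  | empty => simp
  | insert a S hlt ih =>
    have ha : a ∉ S := fun h => lt_irrefl a (hlt a h)
    have hbelow : ∀ b ∈ S, #{c ∈ insert a S | c < b} = #{c ∈ S | c < b} := fun b hb => by
      rw [filter_insert, if_neg (not_lt.2 (hlt b hb).le)]
    have htop : #{c ∈ insert a S | c < a} = #S := by
      rw [filter_insert, if_neg (lt_irrefl a), filter_true_of_mem hlt]
    rw [filter_insert, htop, filter_congr (fun b hb => by rw [hbelow b hb]),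
      card_insert_of_notMem ha]
    split_ifs with h
    · rw [card_insert_of_notMem (fun h' => ha (mem_filter.1 h').1), ih]; omega
    · rw [ih]; omega

section Probability

variable {n : ℕ} (p : Fin n → ℝ)

theorem pr_eq_sum_ite (E : (Fin n → Bool) → Prop) [DecidablePred E] :
    pr p E = ∑ x, if E x then wt p x else 0 := by
  rw [pr, sum_filter]
  exact sum_congr rfl fun x _ => by congr

theorem sum_pr_eq_sum_wt_mul_card {ι : Type*} (I : Finset ι) (E : ι → (Fin n → Bool) → Prop)
    [∀ i, DecidablePred (E i)] :
    ∑ i ∈ I, pr p (E i) = ∑ x, wt p x * #{i ∈ I | E i x} := by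
  simp only [pr_eq_sum_ite]
  rw [sum_comm]
  refine sum_congr rfl fun x _ => ?_
  rw [← sum_filter, sum_const, nsmul_eq_mul, mul_comm]

theorem sum_Icc_pr_le_zeros (k : ℕ) :
    ∑ t ∈ Icc 1 k, pr p (fun x => t ≤ zeros x) = ∑ x, wt p x * min (zeros x) k := by
  classical
  rw [sum_pr_eq_sum_wt_mul_card]
  refine sum_congr rfl fun x _ => ?_
  have : ({t ∈ Icc 1 k | t ≤ zeros x} : Finset ℕ) = Icc 1 (min (zeros x) k) := by
    ext t; simp only [mem_filter, mem_Icc]; omega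
  rw [this, Nat.card_Icc, Nat.add_sub_cancel]

theorem wt_update_false {x : Fin n → Bool} {j : Fin n} (hx : x j = true) :
    p j * wt p (Function.update x j false) = (1 - p j) * wt p x := by
  classical
  have hrest : ∏ i ∈ {j}ᶜ, (if Function.update x j false i then p i else 1 - p i)
      = ∏ i ∈ {j}ᶜ, (if x i then p i else 1 - p i) :=
    prod_congr rfl fun i hi => by rw [Function.update_of_ne (by simpa using hi)]
  rw [wt, wt, Fintype.prod_eq_mul_prod_compl j, Fintype.prod_eq_mul_prod_compl j, hrest]
  simp [hx]
  ring

theorem pr_false_and_eq_mul {j : Fin n} {E : (Fin n → Bool) → Prop}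
    (hE : ∀ x b, E (Function.update x j b) ↔ E x) :
    pr p (fun x => x j = false ∧ E x) = (1 - p j) * pr p E := by
  classical
  have hflip : Function.Involutive fun x : Fin n → Bool => Function.update x j (!x j) :=
    fun x => by simp
  have hsplit : pr p E = pr p (fun x => x j = false ∧ E x) + pr p (fun x => x j = true ∧ E x) := by
    simp only [pr_eq_sum_ite, ← sum_add_distrib]
    refine sum_congr rfl fun x _ => ?_
    cases x j <;> simp
  have hswap : p j * pr p (fun x => x j = false ∧ E x)
      = (1 - p j) * pr p (fun x => x j = true ∧ E x) := by
    simp only [pr_eq_sum_ite, mul_sum]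
    rw [← Equiv.sum_comp (hflip.toPerm _)]
    refine sum_congr rfl fun x _ => ?_
    simp only [Function.Involutive.coe_toPerm]
    rcases Bool.eq_false_or_eq_true (x j) with hx | hx
    · simp [hx, hE, wt_update_false p hx]
    · simp [hx]
  linear_combination (p j - 1) * hsplit + hswap

end Probability

section Strategy

variable {n : ℕ}

theorem zeros_eq_card (x : Fin n → Bool) : zeros x = #{i | x i = false} := by
  rw [zeros, card_filter]
  exact sum_congr rfl fun i _ => by cases x i <;> rfl

theorem mem_tests_permTree (x : Fin n → Bool) (m : Fin n) (L : List (Fin n)) (k : ℕ) :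
    m ∈ (permTree n k L).tests x ↔
      m ∈ L ∧ (L.takeWhile (· ≠ m)).countP (fun i => !x i) < k := by
  induction L generalizing k with
  | nil => cases k <;> simp [permTree, DTree.tests]
  | cons i L ih =>
    cases k with
    | zero => simp [permTree, DTree.tests]
    | succ k =>
      by_cases hi : i = m
      · subst hi; simp [permTree, DTree.tests]
      · cases hx : x i <;> simp [permTree, DTree.tests, hi, hx, ih, Ne.symm hi]

theorem toFinset_takeWhile_ne_finRange (d : Fin n) :
    ((List.finRange n).takeWhile (· ≠ d)).toFinset = Iio d := by
  have hidx : (List.finRange n).findIdx (fun a => !decide (a ≠ d)) = d := by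
    rw [show (fun a => !decide (a ≠ d)) = (· == d) by funext a; by_cases h : a = d <;> simp [h]]
    exact List.idxOf_finRange d
  rw [List.takeWhile_eq_take_findIdx_not, hidx]
  ext j
  simp only [List.mem_toFinset, List.mem_take_iff_getElem, List.getElem_finRange, mem_Iio,
    List.length_finRange, Fin.lt_def]
  constructor
  · rintro ⟨i, hi, rfl⟩
    simp only [Fin.val_cast]
    omega
  · exact fun h => ⟨j, by omega, rfl⟩

variable [NeZero n]

def failuresBefore (x : Fin n → Bool) (s m : Fin n) : ℕ := #{j ∈ Iio (m - s) | x (s + j) = false}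

theorem mem_tests_permStrat_addLeft (x : Fin n → Bool) (k : ℕ) (s m : Fin n) :
    m ∈ (permStrat k (Equiv.addLeft s)).tests x ↔ failuresBefore x s m < k := by
  have hpred : (fun i => decide (i ≠ m)) ∘ Equiv.addLeft s = fun j => decide (j ≠ m - s) := by
    funext j; simp [eq_sub_iff_add_eq']
  have hfail : (fun i => !x i) ∘ Equiv.addLeft s = fun j => decide (x (s + j) = false) := by
    funext j; simp
  rw [permStrat, mem_tests_permTree, List.takeWhile_map, List.countP_map, hpred, hfail,
    ← ((List.nodup_finRange n).sublist (List.takeWhile_sublist _)).card_eq_countP,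
    toFinset_takeWhile_ne_finRange]
  have hm : m ∈ (List.finRange n).map (Equiv.addLeft s) :=
    List.mem_map.2 ⟨m - s, List.mem_finRange _, add_sub_cancel s m⟩
  exact and_iff_right hm

theorem failuresBefore_update_sub_one (x : Fin n → Bool) (s m : Fin n) (b : Bool) :
    failuresBefore (Function.update x (s - 1) b) s m = failuresBefore x s m := by
  refine congrArg card (filter_congr fun j hj => ?_)
  have hne : s + j ≠ s - 1 := fun h => by
    rw [sub_eq_add_neg] at h
    have := (Fin.sub_one_sub_lt_iff (m - s) j).2 (mem_Iio.1 hj)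
    simp [add_left_cancel h] at this
  rw [Function.update_of_ne hne]

theorem card_filter_failuresBefore_lt (x : Fin n → Bool) (m : Fin n) (k : ℕ) :
    #{s | x (s - 1) = false ∧ failuresBefore x s m < k} = min (zeros x) k := by
  -- Reindex shifts `s` as `m - t` and tests `i` as `m - 1 - u`: the shift `m - t` then meets
  -- exactly the failures `u ∈ S` with `u < t` before reaching `m`.
  set S : Finset (Fin n) := {u | x (m - 1 - u) = false}
  have hS : #S = zeros x := by
    rw [zeros_eq_card]
    exact card_equiv (Equiv.subLeft (m - 1)) (by simp [S])
  have hbefore : ∀ t, failuresBefore x (m - t) m = #{u ∈ S | u < t} := fun t => by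
    rw [failuresBefore, sub_sub_cancel]
    refine card_equiv (Equiv.subLeft (t - 1)) fun j => ?_
    simp only [S, mem_filter, mem_univ, true_and, mem_Iio, Equiv.subLeft_apply,
      Fin.sub_one_sub_lt_iff, show m - 1 - (t - 1 - j) = m - t + j by abel, and_comm]
  rw [← hS, ← card_filter_card_filter_lt_lt S k]
  refine card_equiv (Equiv.subLeft m) fun s => ?_
  simp [S, ← hbefore]

theorem sum_one_sub_mul_gprob_permStrat_addLeft (p : Fin n → ℝ) (k : ℕ) (m : Fin n) :
    ∑ s, (1 - p (s - 1)) * gprob p (permStrat k (Equiv.addLeft s)) m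
      = ∑ t ∈ Icc 1 k, pr p (fun x => t ≤ zeros x) := by
  have hcond : ∀ s, (1 - p (s - 1)) * gprob p (permStrat k (Equiv.addLeft s)) m
      = pr p (fun x => x (s - 1) = false ∧ failuresBefore x s m < k) := fun s => by
    rw [pr_false_and_eq_mul p fun x b => by rw [failuresBefore_update_sub_one], gprob]
    simp only [mem_tests_permStrat_addLeft]
  rw [sum_congr rfl fun s _ => hcond s, sum_pr_eq_sum_wt_mul_card, sum_Icc_pr_le_zeros]
  exact sum_congr rfl fun x _ => by rw [card_filter_failuresBefore_lt]

end Strategy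

theorem stmt_7_general (n k : ℕ) [NeZero n] (p : Fin n → ℝ) (t : ℝ) :
    ∀ m : Fin n,
      ∑ s : Fin n, (t * (1 - p (s - 1)) / ∑ j, (1 - p j)) *
          gprob p (permStrat k (Equiv.addLeft s)) m
        = t * (∑ t' ∈ Finset.Icc 1 k, pr p (fun x => t' ≤ zeros x)) / ∑ j, (1 - p j) := by
  intro m
  rw [← sum_one_sub_mul_gprob_permStrat_addLeft, mul_sum, sum_div]
  exact sum_congr rfl fun s _ => by ring

/-- Distributing `t` units of flow among the `n` cyclic-shift conservative strategies,
with fraction `(1-p_{i-1})/∑ⱼ(1-pⱼ)` on the shift starting at `i` (indices cyclic),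
loads every processor by exactly `t·α/∑ⱼ(1-pⱼ)`, where `α = ∑_{t'=1}^k P(Z ≥ t')`. -/
theorem stmt_7 (n k : ℕ) [NeZero n] (hk : 1 ≤ k) (p : Fin n → ℝ)
    (hp : ∀ i, 0 < p i ∧ p i < 1) (t : ℝ) (ht : 0 ≤ t) :
    ∀ m : Fin n,
      ∑ s : Fin n, (t * (1 - p (s - 1)) / ∑ j, (1 - p j)) *
          gprob p (permStrat k (Equiv.addLeft s)) m
        = t * (∑ t' ∈ Finset.Icc 1 k, pr p (fun x => t' ≤ zeros x)) / ∑ j, (1 - p j) :=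
  stmt_7_general n k p t
end
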